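/- Let dA ≥ dB ≥ 2. Then there exists a blocked set of two product MUBs: two mutually unbiased orthonormal bases of EuclideanSpace ℂ (Fin dA × Fin dB), each of whose vectors is a product vector, such that no orthonormal basis of EuclideanSpace ℂ (Fin dA × Fin dB) consisting entirely of product vectors is mutually unbiased with both of them. -/

import Mathlib

open Complex ComplexConjugate Finset
open scoped InnerProductSpace

/-- A product vector `(u ⊗ v)(a,b) = u(a)·v(b)` in `ℂ^{dA} ⊗ ℂ^{dB}`. -/
def IsProductVector {dA dB : ℕ} (ψ : EuclideanSpace ℂ (Fin dA × Fin dB)) : Prop :=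
  ∃ (u : EuclideanSpace ℂ (Fin dA)) (v : EuclideanSpace ℂ (Fin dB)),
    ∀ (a : Fin dA) (b : Fin dB), ψ (a, b) = u a * v b

/-- Two orthonormal bases of `ℂ^{dA} ⊗ ℂ^{dB}` are mutually unbiased. -/
def IsMUBPair {dA dB : ℕ}
    (e f : OrthonormalBasis (Fin dA × Fin dB) ℂ (EuclideanSpace ℂ (Fin dA × Fin dB))) :
    Prop :=
  ∀ v w : Fin dA × Fin dB,
    ‖(inner ℂ (e v) (f w) : ℂ)‖ ^ 2 = 1 / (dA * dB : ℝ)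

/-!
The first basis is the standard one, the second the indirect product basis
`f (j, k) = F j ⊗ D_j F k` of Fourier vectors, where the diagonal unitary `D_j` multiplies the last
coordinate of `ℂ^{dB}` by `i ^ j`.

Suppose `u ⊗ v` is unbiased to both. Unbiasedness to the standard basis makes every `v b` nonzero.
Unbiasedness to `f` factorises as `‖⟪u, F j⟫‖² ‖⟪v, D_j F k⟫‖² = 1 / (dA dB)`, so for each `j` the
Fourier coefficients of `D_j⋆ v` have constant modulus, and hence its cyclic autocorrelation at
shift one vanishes. With `t b = conj (v b) * v (b + 1)` this says
`∑ t + (i ^ j - 1) t (dB - 1) + (conj (i ^ j) - 1) t (dB - 2) = 0`. For `j = 0, 1` and, when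
`dB ≥ 3` (so that `dA ≥ 3`), also `j = 2`, these relations force `t (dB - 1) = 0`: a contradiction.
-/

noncomputable section

theorem IsPrimitiveRoot.sum_fin_zpow_mul {K : Type*} [Field K] {ζ : K} {d : ℕ}
    (hζ : IsPrimitiveRoot ζ d) (m : ℤ) :
    ∑ b : Fin d, ζ ^ ((b : ℤ) * m) = if (d : ℤ) ∣ m then (d : K) else 0 := by
  have hpow : ∀ b : ℕ, ζ ^ ((b : ℤ) * m) = (ζ ^ m) ^ b := fun b => by
    rw [mul_comm, zpow_mul, zpow_natCast]
  simp_rw [hpow]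
  rw [Fin.sum_univ_eq_sum_range (fun b => (ζ ^ m) ^ b)]
  split_ifs with h
  · simp [(hζ.zpow_eq_one_iff_dvd m).2 h]
  · have hd : (ζ ^ m) ^ d = 1 := by
      rw [← zpow_natCast, ← zpow_mul, mul_comm, zpow_mul, zpow_natCast, hζ.pow_eq_one, one_zpow]
    rw [geom_sum_eq (mt (hζ.zpow_eq_one_iff_dvd m).1 h), hd, sub_self, zero_div]

theorem Fin.dvd_sub_val_iff {d : ℕ} (b : Fin d) (m : ℤ) :
    (d : ℤ) ∣ m - b ↔ (b : ℤ) = m % d := by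
  rw [← Int.modEq_iff_dvd, Int.ModEq, Int.emod_eq_of_lt (by positivity) (by exact_mod_cast b.isLt)]

theorem Fin.dvd_val_sub_val_iff {d : ℕ} (b c : Fin d) : (d : ℤ) ∣ (c : ℤ) - b ↔ b = c := by
  rw [Fin.dvd_sub_val_iff, Int.emod_eq_of_lt (by positivity) (by exact_mod_cast c.isLt),
    Int.natCast_inj, Fin.val_inj]

theorem Fin.dvd_val_add_one_sub_val_iff {n : ℕ} (b c : Fin (n + 1)) :
    ((n + 1 : ℕ) : ℤ) ∣ (b : ℤ) + 1 - c ↔ c = b + 1 := by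
  rw [Fin.dvd_sub_val_iff, Fin.ext_iff, Fin.val_add, Fin.val_one', Nat.add_mod_mod,
    ← Int.natCast_inj]
  push_cast
  rfl

def zeta (d : ℕ) : ℂ := exp (2 * Real.pi * I / d)

theorem isPrimitiveRoot_zeta {d : ℕ} [NeZero d] : IsPrimitiveRoot (zeta d) d :=
  isPrimitiveRoot_exp d (NeZero.ne d)

theorem norm_zeta (d : ℕ) : ‖zeta d‖ = 1 := by
  simp [zeta, norm_exp]

theorem conj_zeta_zpow (d : ℕ) (m : ℤ) : conj (zeta d ^ m) = zeta d ^ (-m) := by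
  rw [← inv_eq_conj (by rw [norm_zpow, norm_zeta, one_zpow]), zpow_neg]

theorem sum_zeta_zpow_mul (d : ℕ) [NeZero d] (m : ℤ) :
    ∑ b : Fin d, zeta d ^ ((b : ℤ) * m) = if (d : ℤ) ∣ m then (d : ℂ) else 0 :=
  isPrimitiveRoot_zeta.sum_fin_zpow_mul m

def fourierVec (d : ℕ) (k : Fin d) : EuclideanSpace ℂ (Fin d) :=
  WithLp.toLp 2 fun b => zeta d ^ ((k : ℤ) * b) / Real.sqrt d

theorem norm_fourierVec_apply (d : ℕ) (k b : Fin d) : ‖fourierVec d k b‖ = (Real.sqrt d)⁻¹ := by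
  simp [fourierVec, norm_zpow, norm_zeta]

theorem inner_fourierVec_right {d : ℕ} (x : EuclideanSpace ℂ (Fin d)) (k : Fin d) :
    ⟪x, fourierVec d k⟫_ℂ = (∑ b, conj (x b) * zeta d ^ ((k : ℤ) * b)) / Real.sqrt d := by
  simp only [PiLp.inner_apply, RCLike.inner_apply', fourierVec, sum_div, mul_div_assoc]

theorem ofReal_sqrt_mul_self_natCast (d : ℕ) :
    ((Real.sqrt d : ℝ) : ℂ) * (Real.sqrt d : ℝ) = d := by
  rw [← ofReal_mul, Real.mul_self_sqrt (Nat.cast_nonneg d), ofReal_natCast]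

theorem orthonormal_fourierVec (d : ℕ) [NeZero d] : Orthonormal ℂ (fourierVec d) := by
  rw [orthonormal_iff_ite]
  intro k k'
  have hd : (d : ℂ) ≠ 0 := Nat.cast_ne_zero.2 (NeZero.ne d)
  have hterm : ∀ b : Fin d, conj (fourierVec d k b) * zeta d ^ ((k' : ℤ) * b) =
      zeta d ^ ((b : ℤ) * (k' - k)) / Real.sqrt d := fun b => by
    simp only [fourierVec, map_div₀, conj_ofReal, conj_zeta_zpow]
    rw [div_mul_eq_mul_div, ← zpow_add₀ (isPrimitiveRoot_zeta.ne_zero (NeZero.ne d))]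
    ring_nf
  rw [inner_fourierVec_right, Finset.sum_congr rfl fun b _ => hterm b, ← sum_div,
    sum_zeta_zpow_mul, div_div, ofReal_sqrt_mul_self_natCast]
  simp only [Fin.dvd_val_sub_val_iff]
  split_ifs <;> simp [hd]

theorem sum_zeta_zpow_mul_inner_fourierVec_mul_conj {n : ℕ}
    (x : EuclideanSpace ℂ (Fin (n + 1))) :
    ∑ k : Fin (n + 1), zeta (n + 1) ^ (k : ℤ) *
        (⟪x, fourierVec (n + 1) k⟫_ℂ * conj ⟪x, fourierVec (n + 1) k⟫_ℂ) =
      ∑ b, conj (x b) * x (b + 1) := by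
  have hζ : zeta (n + 1) ≠ 0 := isPrimitiveRoot_zeta.ne_zero (Nat.succ_ne_zero n)
  have hd : ((n + 1 : ℕ) : ℂ) ≠ 0 := Nat.cast_ne_zero.2 (Nat.succ_ne_zero n)
  have hexpand : ∀ k : Fin (n + 1),
      zeta (n + 1) ^ (k : ℤ) *
          (⟪x, fourierVec (n + 1) k⟫_ℂ * conj ⟪x, fourierVec (n + 1) k⟫_ℂ) =
        (∑ b, ∑ c, conj (x b) * x c * zeta (n + 1) ^ ((k : ℤ) * ((b : ℤ) + 1 - c))) /
          (n + 1 : ℕ) := by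
    intro k
    simp only [inner_fourierVec_right, map_div₀, conj_ofReal, map_sum, map_mul, conj_conj,
      conj_zeta_zpow]
    rw [div_mul_div_comm, ofReal_sqrt_mul_self_natCast, sum_mul_sum, mul_div_assoc', mul_sum]
    refine congrArg (· / _) (sum_congr rfl fun b _ => ?_)
    rw [mul_sum]
    refine sum_congr rfl fun c _ => ?_
    rw [show (k : ℤ) * ((b : ℤ) + 1 - c) = k + k * b + -(k * c) by ring,
      zpow_add₀ hζ, zpow_add₀ hζ]
    ring
  have hinner : ∀ b c : Fin (n + 1),
      ∑ k : Fin (n + 1), conj (x b) * x c * zeta (n + 1) ^ ((k : ℤ) * ((b : ℤ) + 1 - c)) =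
        if c = b + 1 then conj (x b) * x c * (n + 1 : ℕ) else 0 := fun b c => by
    simp_rw [← mul_sum, sum_zeta_zpow_mul, Fin.dvd_val_add_one_sub_val_iff, mul_ite, mul_zero]
  simp_rw [hexpand, ← sum_div]
  rw [sum_comm]
  refine (div_eq_iff hd).2 ?_
  rw [sum_mul]
  refine sum_congr rfl fun b _ => ?_
  rw [sum_comm]
  simp_rw [hinner, sum_ite_eq', mem_univ, if_true]

theorem sum_conj_mul_add_one_eq_zero_of_norm_inner_fourierVec_eq {n : ℕ}
    (x : EuclideanSpace ℂ (Fin (n + 2))) {c : ℝ} (h : ∀ k, ‖⟪x, fourierVec (n + 2) k⟫_ℂ‖ = c) :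
    ∑ b, conj (x b) * x (b + 1) = 0 := by
  have hconst : ∀ k,
      ⟪x, fourierVec (n + 2) k⟫_ℂ * conj ⟪x, fourierVec (n + 2) k⟫_ℂ = (c : ℂ) ^ 2 := fun k => by
    rw [mul_conj', h]
  have hsum : ∑ k : Fin (n + 2), zeta (n + 2) ^ (k : ℤ) = 0 := by
    have hndvd : ¬(n : ℤ) + 2 ∣ 1 := fun hdvd => by
      have := Int.le_of_dvd one_pos hdvd
      omega
    simpa [hndvd] using sum_zeta_zpow_mul (n + 2) 1
  calc ∑ b, conj (x b) * x (b + 1)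
      = ∑ k : Fin (n + 2), zeta (n + 2) ^ (k : ℤ) *
          (⟪x, fourierVec (n + 2) k⟫_ℂ * conj ⟪x, fourierVec (n + 2) k⟫_ℂ) :=
        (sum_zeta_zpow_mul_inner_fourierVec_mul_conj (n := n + 1) x).symm
    _ = 0 := by simp_rw [hconst, ← sum_mul, hsum, zero_mul]

section ProductVectors

variable {ι κ : Type*}

def twist (φ : ι → ℂ) (x : EuclideanSpace ℂ ι) : EuclideanSpace ℂ ι :=
  WithLp.toLp 2 fun i => φ i * x i

def tensorVec (u : EuclideanSpace ℂ ι) (v : EuclideanSpace ℂ κ) : EuclideanSpace ℂ (ι × κ) :=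
  WithLp.toLp 2 fun p => u p.1 * v p.2

theorem tensorVec_single_single [DecidableEq ι] [DecidableEq κ] (a : ι) (b : κ) (s t : ℂ) :
    tensorVec (EuclideanSpace.single a s) (EuclideanSpace.single b t) =
      EuclideanSpace.single (a, b) (s * t) := by
  ext ⟨a', b'⟩
  by_cases ha : a' = a <;> by_cases hb : b' = b <;> simp [tensorVec, ha, hb]

variable [Fintype ι] [Fintype κ]

theorem inner_twist_right (φ : ι → ℂ) (x y : EuclideanSpace ℂ ι) :
    ⟪x, twist φ y⟫_ℂ = ⟪twist (fun i => conj (φ i)) x, y⟫_ℂ := by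
  simp only [PiLp.inner_apply, RCLike.inner_apply', twist, map_mul, conj_conj]
  exact sum_congr rfl fun i _ => by ring

theorem Orthonormal.twist {α : Type*} {φ : ι → ℂ} (hφ : ∀ i, ‖φ i‖ = 1)
    {x : α → EuclideanSpace ℂ ι} (hx : Orthonormal ℂ x) :
    Orthonormal ℂ fun k => _root_.twist φ (x k) := by
  have hinner : ∀ y z, ⟪_root_.twist φ y, _root_.twist φ z⟫_ℂ = ⟪y, z⟫_ℂ := fun y z => by
    simp only [PiLp.inner_apply, RCLike.inner_apply', _root_.twist, map_mul]
    refine sum_congr rfl fun i _ => ?_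
    rw [show conj (φ i) * conj (y i) * (φ i * z i) = φ i * conj (φ i) * (conj (y i) * z i) by
      ring, mul_conj', hφ, ofReal_one, one_pow, one_mul]
  classical
  rw [orthonormal_iff_ite] at hx ⊢
  exact fun k k' => (hinner _ _).trans (hx k k')

theorem inner_tensorVec (u u' : EuclideanSpace ℂ ι) (v v' : EuclideanSpace ℂ κ) :
    ⟪tensorVec u v, tensorVec u' v'⟫_ℂ = ⟪u, u'⟫_ℂ * ⟪v, v'⟫_ℂ := by
  simp only [PiLp.inner_apply, RCLike.inner_apply', tensorVec, Fintype.sum_prod_type, sum_mul_sum,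
    map_mul]
  exact sum_congr rfl fun a _ => sum_congr rfl fun b _ => by ring

theorem orthonormal_tensorVec {α β : Type*} {x : α → EuclideanSpace ℂ ι}
    {y : α → β → EuclideanSpace ℂ κ} (hx : Orthonormal ℂ x) (hy : ∀ j, Orthonormal ℂ (y j)) :
    Orthonormal ℂ fun p : α × β => tensorVec (x p.1) (y p.1 p.2) := by
  classical
  simp only [orthonormal_iff_ite] at hx hy ⊢
  rintro ⟨j, k⟩ ⟨j', k'⟩
  rw [inner_tensorVec, hx]
  by_cases hj : j = j'
  · subst hj
    simp [hy]
  · simp [hj]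

end ProductVectors

theorem isProductVector_iff {dA dB : ℕ} (ψ : EuclideanSpace ℂ (Fin dA × Fin dB)) :
    IsProductVector ψ ↔ ∃ u v, ψ = tensorVec u v := by
  refine exists₂_congr fun u v => ⟨fun h => ?_, fun h a b => by rw [h]; rfl⟩
  ext ⟨a, b⟩
  exact h a b

def phase (n j : ℕ) (b : Fin (n + 2)) : ℂ :=
  if b = Fin.last (n + 1) then I ^ j else 1

theorem norm_phase (n j : ℕ) (b : Fin (n + 2)) : ‖phase n j b‖ = 1 := by
  unfold phase
  split_ifs <;> simp

theorem sum_phase_mul_conj_phase_add_one_mul (n j : ℕ) (t : Fin (n + 2) → ℂ) :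
    ∑ b, phase n j b * conj (phase n j (b + 1)) * t b =
      ∑ b, t b + (I ^ j - 1) * t (Fin.last (n + 1)) +
        (conj (I ^ j) - 1) * t (Fin.last n).castSucc := by
  have hl1 : (Fin.last n).castSucc + 1 = Fin.last (n + 1) := by
    rw [Fin.coeSucc_eq_succ, Fin.succ_last]
  have hne : Fin.last (n + 1) ≠ (Fin.last n).castSucc := (Fin.castSucc_lt_last _).ne'
  have hlast0 : (0 : Fin (n + 2)) ≠ Fin.last (n + 1) := (Fin.last_pos).ne
  have hdiff : ∑ b, (phase n j b * conj (phase n j (b + 1)) - 1) * t b =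
      (I ^ j - 1) * t (Fin.last (n + 1)) + (conj (I ^ j) - 1) * t (Fin.last n).castSucc := by
    rw [Fintype.sum_eq_add _ _ hne]
    · simp [phase, hl1, Fin.last_add_one, hlast0, hne.symm]
    · rintro b ⟨hb, hb'⟩
      have hb1 : b + 1 ≠ Fin.last (n + 1) := fun h => hb' (add_right_cancel (h.trans hl1.symm))
      simp [phase, hb, hb1]
  rw [add_assoc, ← hdiff, ← sum_add_distrib]
  exact sum_congr rfl fun b _ => by ring

theorem eq_zero_of_forall_sum_phase_mul_conj_phase_add_one_mul_eq_zero {n : ℕ}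
    (t : Fin (n + 2) → ℂ)
    (h : ∀ j < n + 2, ∑ b, phase n j b * conj (phase n j (b + 1)) * t b = 0) :
    t (Fin.last (n + 1)) = 0 := by
  simp only [sum_phase_mul_conj_phase_add_one_mul] at h
  have h0 := h 0 (by omega)
  have h1 := h 1 (by omega)
  simp only [pow_zero, pow_one, map_one, sub_self, zero_mul, add_zero, conj_I] at h0 h1
  have hpair : t (Fin.last n).castSucc + t (Fin.last (n + 1)) = 0 := by
    -- for `n = 0` the two special coordinates exhaust `Fin 2`, otherwise `j = 2` is available
    rcases n with _ | n
    · simpa [Fin.sum_univ_two] using h0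
    · have h2 := h 2 (by omega)
      simp only [I_sq, map_neg, map_one] at h2
      linear_combination (h0 - h2) / 2
  have h2I : 2 * I * t (Fin.last (n + 1)) = 0 := by
    linear_combination h1 - h0 + (I + 1) * hpair
  simpa [I_ne_zero] using h2I

-- `F j ⊗ D_j F k` with `D_j = twist (phase n j)`, for `dA = m` and `dB = n + 2`.
def twistedFourierVec (m n : ℕ) (p : Fin m × Fin (n + 2)) :
    EuclideanSpace ℂ (Fin m × Fin (n + 2)) :=
  tensorVec (fourierVec m p.1) (twist (phase n p.1) (fourierVec (n + 2) p.2))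

theorem orthonormal_twistedFourierVec (m n : ℕ) [NeZero m] :
    Orthonormal ℂ (twistedFourierVec m n) :=
  orthonormal_tensorVec (y := fun (j : Fin m) k => twist (phase n j) (fourierVec (n + 2) k))
    (orthonormal_fourierVec m) fun j => (orthonormal_fourierVec (n + 2)).twist (norm_phase n j)

def twistedFourierBasis (m n : ℕ) [NeZero m] :
    OrthonormalBasis (Fin m × Fin (n + 2)) ℂ (EuclideanSpace ℂ (Fin m × Fin (n + 2))) :=
  OrthonormalBasis.mk (orthonormal_twistedFourierVec m n)
    ((orthonormal_twistedFourierVec m n).linearIndependent.span_eq_top_of_card_eq_finrank'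
      (by simp)).ge

@[simp]
theorem coe_twistedFourierBasis (m n : ℕ) [NeZero m] :
    ⇑(twistedFourierBasis m n) = twistedFourierVec m n :=
  OrthonormalBasis.coe_mk _ _

theorem isMUBPair_basisFun_twistedFourierBasis (m n : ℕ) [NeZero m] :
    IsMUBPair (EuclideanSpace.basisFun _ ℂ) (twistedFourierBasis m n) := by
  rintro p ⟨j, k⟩
  rw [EuclideanSpace.basisFun_apply, EuclideanSpace.inner_single_left, map_one, one_mul,
    coe_twistedFourierBasis]
  simp [twistedFourierVec, tensorVec, twist, norm_fourierVec_apply, norm_phase, mul_pow]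
  rw [Real.sq_sqrt (by positivity)]
  ring

theorem false_of_unbiased_tensorVec {m n : ℕ} [NeZero m] (hnm : n + 2 ≤ m)
    (u : EuclideanSpace ℂ (Fin m)) (v : EuclideanSpace ℂ (Fin (n + 2)))
    (he : ∀ p, ‖⟪tensorVec u v, EuclideanSpace.basisFun _ ℂ p⟫_ℂ‖ ^ 2 = 1 / (m * (n + 2 : ℕ) : ℝ))
    (hf : ∀ q, ‖⟪tensorVec u v, twistedFourierVec m n q⟫_ℂ‖ ^ 2 = 1 / (m * (n + 2 : ℕ) : ℝ)) :
    False := by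
  have hN : (1 / (m * (n + 2 : ℕ) : ℝ)) ≠ 0 := by
    have : (m : ℝ) ≠ 0 := Nat.cast_ne_zero.2 (NeZero.ne m)
    positivity
  have hv : ∀ b, v b ≠ 0 := fun b hb => hN <| by
    rw [← he (0, b), EuclideanSpace.basisFun_apply, EuclideanSpace.inner_single_right]
    simp [tensorVec, hb]
  have hconst : ∀ (j : Fin m) k,
      ‖⟪twist (fun b => conj (phase n j b)) v, fourierVec (n + 2) k⟫_ℂ‖ =
        ‖⟪twist (fun b => conj (phase n j b)) v, fourierVec (n + 2) 0⟫_ℂ‖ := by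
    intro j k
    have hjk := hf (j, k)
    rw [← hf (j, 0)] at hjk
    simp only [twistedFourierVec, inner_tensorVec, norm_mul, mul_pow, inner_twist_right] at hjk
    refine (pow_left_inj₀ (norm_nonneg _) (norm_nonneg _) two_ne_zero).1
      (mul_left_cancel₀ (fun h0 => hN ?_) hjk)
    rw [← hf (j, 0)]
    simp [twistedFourierVec, inner_tensorVec,
      norm_eq_zero.1 (pow_eq_zero_iff two_ne_zero |>.1 h0)]
  have hauto : ∀ j : Fin m,
      ∑ b, phase n j b * conj (phase n j (b + 1)) * (conj (v b) * v (b + 1)) = 0 := by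
    intro j
    rw [← sum_conj_mul_add_one_eq_zero_of_norm_inner_fourierVec_eq _ (hconst j)]
    refine sum_congr rfl fun b _ => ?_
    simp only [twist, map_mul, conj_conj]
    ring
  have hlast := eq_zero_of_forall_sum_phase_mul_conj_phase_add_one_mul_eq_zero
    (fun b => conj (v b) * v (b + 1)) fun j hj => hauto ⟨j, by omega⟩
  simp only [Fin.last_add_one, mul_eq_zero, map_eq_zero] at hlast
  exact hlast.elim (hv _) (hv _)

end

theorem exists_blocked_pair_of_product_mubs (dA dB : ℕ) (hB : 2 ≤ dB) (hAB : dB ≤ dA) :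
    ∃ e f : OrthonormalBasis (Fin dA × Fin dB) ℂ (EuclideanSpace ℂ (Fin dA × Fin dB)),
      (∀ v, IsProductVector (e v)) ∧
      (∀ v, IsProductVector (f v)) ∧
      IsMUBPair e f ∧
      ∀ g : OrthonormalBasis (Fin dA × Fin dB) ℂ (EuclideanSpace ℂ (Fin dA × Fin dB)),
        (∀ v, IsProductVector (g v)) → ¬(IsMUBPair g e ∧ IsMUBPair g f) := by
  obtain ⟨n, rfl⟩ : ∃ n, dB = n + 2 := ⟨dB - 2, by omega⟩
  have : NeZero dA := ⟨by omega⟩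
  refine ⟨EuclideanSpace.basisFun _ ℂ, twistedFourierBasis dA n, fun ⟨a, b⟩ => ?_,
    fun p => (isProductVector_iff _).2 ⟨_, _, congrFun (coe_twistedFourierBasis dA n) p⟩,
    isMUBPair_basisFun_twistedFourierBasis dA n, fun g hg ⟨hge, hgf⟩ => ?_⟩
  · rw [isProductVector_iff, EuclideanSpace.basisFun_apply, ← mul_one (1 : ℂ),
      ← tensorVec_single_single]
    exact ⟨_, _, rfl⟩
  · obtain ⟨u, v, huv⟩ := (isProductVector_iff _).1 (hg (0, 0))
    refine false_of_unbiased_tensorVec hAB u v (fun p => ?_) (fun q => ?_)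
    · rw [← huv]
      exact hge _ p
    · rw [← huv, ← coe_twistedFourierBasis]
      exact hgf _ q
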